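/- Let R be an alternative ring that is not associative. Assume (A): every non-zero commutator [a,b] = a*b - b*a is not a left zero divisor; and (B): if x in R and y, z both lie in the commutative center Z of R, then (x*y)*z = x*(y*z). Then every non-zero element z of Z is not a left zero divisor: z*t = 0 implies t = 0. -/

import Mathlib

/-!
For central `z` the associator identities of an alternative ring give `[a z, b] = [a, b] z`,
so right multiplication by a central element maps commutators to commutators.

Let `z ≠ 0` be central with `z t = 0`. Then `[t, s] z = [t z, s] = 0` for every `s`, and since a
non-zero commutator is not a left zero divisor, `t` commutes with everything. Because `R` is not
associative it is not commutative (by (B)), so some commutator `[a, b]` is non-zero and then so is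
`[a, b] z = [a z, b]`. By (B) for the central elements `z, t`, `([a, b] z) t = [a, b] (z t) = 0`,
hence `t = 0`.
-/

section Alternative

variable {R : Type*} [NonUnitalNonAssocRing R]

theorem associator_swap_left (hl : ∀ x y : R, (x * x) * y = x * (x * y)) (x y z : R) :
    associator y x z = -associator x y z := by
  have h := hl (x + y) z
  simp only [add_mul, mul_add, hl x z, hl y z] at h
  simp only [associator_apply]
  linear_combination (norm := abel1) h

theorem associator_swap_right (hr : ∀ x y : R, (y * x) * x = y * (x * x)) (x y z : R) :
    associator x z y = -associator x y z := by
  have h := hr (y + z) x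
  simp only [add_mul, mul_add, hr y x, hr z x] at h
  simp only [associator_apply]
  linear_combination (norm := abel1) h

theorem associator_cyclic (hl : ∀ x y : R, (x * x) * y = x * (x * y))
    (hr : ∀ x y : R, (y * x) * x = y * (x * x)) (x y z : R) :
    associator y z x = associator x y z := by
  rw [associator_swap_right hr, associator_swap_left hl, neg_neg]

theorem mul_central_mul (hr : ∀ x y : R, (y * x) * x = y * (x * x)) {z : R}
    (hz : ∀ r : R, z * r = r * z) (a b : R) :
    (a * z) * b = (a * b) * z - 2 • associator a b z := by
  have h := associator_swap_right hr a b z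
  rw [associator_apply, associator_apply, hz b] at h
  rw [two_nsmul, associator_apply]
  linear_combination (norm := abel1) h

theorem mul_mul_central (hl : ∀ x y : R, (x * x) * y = x * (x * y))
    (hr : ∀ x y : R, (y * x) * x = y * (x * x)) {z : R} (hz : ∀ r : R, z * r = r * z)
    (a b : R) :
    b * (a * z) = (b * a) * z - 2 • associator a b z := by
  have h₁ : associator b z a = associator a b z := associator_cyclic hl hr a b z
  have h₂ : associator z b a = -associator a b z := by
    rw [associator_cyclic hl hr a z b, associator_swap_right hr]
  rw [associator_apply, ← hz b, hz a] at h₁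
  rw [associator_apply, hz (b * a)] at h₂
  rw [two_nsmul]
  linear_combination (norm := abel1) h₂ - h₁

theorem commutator_mul_central (hl : ∀ x y : R, (x * x) * y = x * (x * y))
    (hr : ∀ x y : R, (y * x) * x = y * (x * x)) {z : R} (hz : ∀ r : R, z * r = r * z)
    (a b : R) :
    (a * z) * b - b * (a * z) = (a * b - b * a) * z := by
  rw [mul_central_mul hr hz, mul_mul_central hl hr hz, sub_mul]
  abel

theorem commute_of_central_mul_eq_zero (hl : ∀ x y : R, (x * x) * y = x * (x * y))
    (hr : ∀ x y : R, (y * x) * x = y * (x * x))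
    (hA : ∀ a b : R, a * b - b * a ≠ 0 → ∀ t : R, (a * b - b * a) * t = 0 → t = 0)
    {z t : R} (hz : ∀ r : R, z * r = r * z) (hz0 : z ≠ 0) (hzt : z * t = 0) (s : R) :
    t * s = s * t := by
  have hann : (t * s - s * t) * z = 0 := by
    rw [← commutator_mul_central hl hr hz, ← hz t, hzt, zero_mul, mul_zero, sub_zero]
  by_contra hts
  exact hz0 (hA t s (sub_ne_zero.mpr hts) z hann)

theorem exists_mul_ne_mul_of_not_associative (hna : ∃ a b c : R, (a * b) * c ≠ a * (b * c))
    (hB : ∀ x y z : R, (∀ r : R, y * r = r * y) → (∀ r : R, z * r = r * z) →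
      (x * y) * z = x * (y * z)) :
    ∃ a b : R, a * b ≠ b * a := by
  by_contra! hcomm
  obtain ⟨a, b, c, habc⟩ := hna
  exact habc (hB a b c (hcomm b) (hcomm c))

end Alternative

theorem stmt_17 {R : Type*} [NonUnitalNonAssocRing R]
    (hl : ∀ x y : R, (x*x)*y = x*(x*y))
    (hr : ∀ x y : R, (y*x)*x = y*(x*x))
    (hna : ∃ a b c : R, (a*b)*c ≠ a*(b*c))
    (hA : ∀ a b : R, a*b - b*a ≠ 0 → ∀ t : R, (a*b - b*a)*t = 0 → t = 0)
    (hB : ∀ x y z : R, (∀ r : R, y*r = r*y) → (∀ r : R, z*r = r*z) →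
      (x*y)*z = x*(y*z)) :
    ∀ z : R, (∀ r : R, z*r = r*z) → z ≠ 0 → ∀ t : R, z*t = 0 → t = 0 := by
  intro z hz hz0 t hzt
  have ht : ∀ r : R, t * r = r * t := commute_of_central_mul_eq_zero hl hr hA hz hz0 hzt
  obtain ⟨a, b, hab⟩ := exists_mul_ne_mul_of_not_associative hna hB
  have hcomm := commutator_mul_central hl hr hz a b
  refine hA (a * z) b ?_ t ?_
  · rw [hcomm]
    exact fun h => hz0 (hA a b (sub_ne_zero.mpr hab) z h)
  · rw [hcomm, hB _ z t hz ht, hzt, mul_zero]
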